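/- arXiv:0807.1090 — 8 statements merged into one kernel-verified Lean document; each statement's English description precedes it below -/
import Mathlib

section
/- Let X be a real Banach space and T : X ⇉ X* a maximal monotone operator. Then T is non-enlargeable (i.e. T^ε = T for all ε ≥ 0) if and only if the effective domain of the Fitzpatrick function of T equals T, that is, {(x, x*) ∈ X × X* : φ_T(x, x*) < +∞} = T. -/
/-- A subset of `X × X*` is monotone if `⟨x - y, x* - y*⟩ ≥ 0` for all its pairs of points. -/
def IsMonotoneSet {X : Type*} [NormedAddCommGroup X] [NormedSpace ℝ X]
    (T : Set (X × (X →L[ℝ] ℝ))) : Prop :=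
  ∀ p ∈ T, ∀ q ∈ T, 0 ≤ (p.2 - q.2) (p.1 - q.1)

/-- A subset of `X × X*` is maximal monotone if it is monotone and maximal with respect
to inclusion among monotone subsets. -/
def IsMaximalMonotone {X : Type*} [NormedAddCommGroup X] [NormedSpace ℝ X]
    (T : Set (X × (X →L[ℝ] ℝ))) : Prop :=
  IsMonotoneSet T ∧ ∀ S, IsMonotoneSet S → T ⊆ S → S = T

/-- The ε-enlargement of `T : X ⇉ X*`. -/
def enlargement {X : Type*} [NormedAddCommGroup X] [NormedSpace ℝ X]
    (T : Set (X × (X →L[ℝ] ℝ))) (ε : ℝ) : Set (X × (X →L[ℝ] ℝ)) :=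
  {p | ∀ q ∈ T, (p.2 - q.2) (p.1 - q.1) ≥ -ε}

/-- The Fitzpatrick function of `T : X ⇉ X*`, with values in the extended reals. -/
noncomputable def fitzpatrick {X : Type*} [NormedAddCommGroup X] [NormedSpace ℝ X]
    (T : Set (X × (X →L[ℝ] ℝ))) (p : X × (X →L[ℝ] ℝ)) : EReal :=
  ⨆ q ∈ T, ((q.2 p.1 + p.2 q.1 - q.2 q.1 : ℝ) : EReal)

lemma pairing_expand {X : Type*} [NormedAddCommGroup X] [NormedSpace ℝ X]
    (p q : X × (X →L[ℝ] ℝ)) :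
    (p.2 - q.2) (p.1 - q.1) = p.2 p.1 - (q.2 p.1 + p.2 q.1 - q.2 q.1) := by
  simp only [ContinuousLinearMap.sub_apply, map_sub]
  ring

/-- A maximal monotone `T : X ⇉ X*` on a real Banach space is non-enlargeable
(`T^ε = T` for all `ε ≥ 0`) iff the effective domain of its Fitzpatrick function is `T`. -/
theorem nonEnlargeable_iff_effectiveDomain_fitzpatrick_eq {X : Type*} [NormedAddCommGroup X]
    [NormedSpace ℝ X] [CompleteSpace X] (T : Set (X × (X →L[ℝ] ℝ)))
    (hT : IsMaximalMonotone T) :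
    (∀ ε : ℝ, 0 ≤ ε → enlargement T ε = T) ↔ {p | fitzpatrick T p < ⊤} = T := by
  obtain ⟨hmono, hmax⟩ := hT
  have hTle : ∀ p ∈ T, fitzpatrick T p < ⊤ := by
    intro p hp
    have hle : fitzpatrick T p ≤ ((p.2 p.1 : ℝ) : EReal) := by
      refine iSup₂_le fun q hq => ?_
      have h0 := hmono p hp q hq
      rw [pairing_expand] at h0
      exact_mod_cast by linarith
    exact lt_of_le_of_lt hle (EReal.coe_lt_top _)
  constructor
  · intro h
    ext p
    simp only [Set.mem_setOf_eq]
    constructor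
    · intro hφ
      have hr : ∀ q ∈ T, (q.2 p.1 + p.2 q.1 - q.2 q.1 : ℝ) ≤ (fitzpatrick T p).toReal := by
        intro q hq
        have h1 : ((q.2 p.1 + p.2 q.1 - q.2 q.1 : ℝ) : EReal) ≤ fitzpatrick T p :=
          le_iSup₂ (f := fun q (_ : q ∈ T) => ((q.2 p.1 + p.2 q.1 - q.2 q.1 : ℝ) : EReal)) q hq
        have h2 := h1.trans (EReal.le_coe_toReal hφ.ne)
        exact_mod_cast h2
      set ε := max 0 ((fitzpatrick T p).toReal - p.2 p.1) with hε
      have hmem : p ∈ enlargement T ε := by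
        intro q hq
        rw [pairing_expand]
        have h1 := hr q hq
        have h2 : (fitzpatrick T p).toReal - p.2 p.1 ≤ ε := le_max_right _ _
        linarith
      rw [h ε (le_max_left _ _)] at hmem
      exact hmem
    · exact hTle p
  · intro h ε hε
    ext p
    constructor
    · intro hp
      have hle : fitzpatrick T p ≤ ((p.2 p.1 + ε : ℝ) : EReal) := by
        refine iSup₂_le fun q hq => ?_
        have h0 := hp q hq
        rw [pairing_expand] at h0
        exact_mod_cast by linarith
      have : p ∈ {p | fitzpatrick T p < ⊤} := lt_of_le_of_lt hle (EReal.coe_lt_top _)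
      rwa [h] at this
    · intro hp q hq
      have h0 := hmono p hp q hq
      linarith
end

section
/- Let X be a real Banach space and T : X ⇉ X* a maximal monotone operator which is also a linear subspace of X × X*. Then T^⊢ ⊂ {(x, x*) ∈ X × X* : φ_T(x, x*) = 0}, i.e. the Fitzpatrick function of T vanishes at every point of T^⊢. -/
/-- `B^⊢ = {(y, y*) : ⟨x, y*⟩ + ⟨y, x*⟩ = 0 for all (x, x*) ∈ B}`. -/
def vdash {X : Type*} [NormedAddCommGroup X] [NormedSpace ℝ X]
    (B : Set (X × (X →L[ℝ] ℝ))) : Set (X × (X →L[ℝ] ℝ)) :=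
  {q | ∀ p ∈ B, p.2 q.1 + q.2 p.1 = 0}

/-- If `T : X ⇉ X*` is maximal monotone and a linear subspace of `X × X*`, then the
Fitzpatrick function of `T` vanishes at every point of `T^⊢`. -/
theorem fitzpatrick_eq_zero_on_vdash {X : Type*} [NormedAddCommGroup X]
    [NormedSpace ℝ X] [CompleteSpace X] (T : Set (X × (X →L[ℝ] ℝ)))
    (hT : IsMaximalMonotone T) (hsub : ∃ S : Submodule ℝ (X × (X →L[ℝ] ℝ)), T = ↑S) :
    vdash T ⊆ {p | fitzpatrick T p = (0 : EReal)} := by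
  obtain ⟨S, rfl⟩ := hsub
  intro p hp
  have h0 : (0 : X × (X →L[ℝ] ℝ)) ∈ (S : Set (X × (X →L[ℝ] ℝ))) := S.zero_mem
  show fitzpatrick (S : Set (X × (X →L[ℝ] ℝ))) p = (0 : EReal)
  unfold fitzpatrick
  apply le_antisymm
  · refine iSup₂_le fun q hq => ?_
    have h1 : q.2 p.1 + p.2 q.1 = 0 := hp q hq
    have h2 : (0 : ℝ) ≤ q.2 q.1 := by simpa using hT.1 q hq 0 h0
    have h3 : (q.2 p.1 + p.2 q.1 - q.2 q.1 : ℝ) ≤ 0 := by rw [h1]; linarith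
    exact_mod_cast h3
  · have := le_iSup₂ (f := fun (q : X × (X →L[ℝ] ℝ)) (_ : q ∈ (S : Set (X × (X →L[ℝ] ℝ)))) =>
      ((q.2 p.1 + p.2 q.1 - q.2 q.1 : ℝ) : EReal)) 0 h0
    simpa using this
end

section
/- Let X be a real Banach space. If A ⊂ X × X* is self-cancelling and A^⊢ is maximal monotone, then for every (x₀, x₀*) ∈ X × X*, the operator T = A^⊢ + {(x₀, x₀*)} is non-enlargeable; equivalently, the effective domain of the Fitzpatrick function of T equals T. -/
/-- `A ⊆ X × X*` is self-cancelling if it is a linear subspace of `X × X*` and the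
duality product vanishes on it. -/
def IsSelfCancelling {X : Type*} [NormedAddCommGroup X] [NormedSpace ℝ X]
    (A : Set (X × (X →L[ℝ] ℝ))) : Prop :=
  (∃ S : Submodule ℝ (X × (X →L[ℝ] ℝ)), A = ↑S) ∧ ∀ p ∈ A, p.2 p.1 = 0

/-- If `A ⊆ X × X*` is self-cancelling and `A^⊢` is maximal monotone, then for every
`(x₀, x₀*)` the translate `T = A^⊢ + {(x₀, x₀*)}` is non-enlargeable; equivalently,
the effective domain of the Fitzpatrick function of `T` equals `T`. -/
theorem translate_vdash_nonEnlargeable {X : Type*} [NormedAddCommGroup X]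
    [NormedSpace ℝ X] [CompleteSpace X] (A : Set (X × (X →L[ℝ] ℝ)))
    (hA : IsSelfCancelling A) (hmax : IsMaximalMonotone (vdash A))
    (x₀ : X) (x₀s : X →L[ℝ] ℝ) :
    (∀ ε : ℝ, 0 ≤ ε →
        enlargement ((fun p => p + (x₀, x₀s)) '' vdash A) ε
          = (fun p => p + (x₀, x₀s)) '' vdash A) ∧
      {p | fitzpatrick ((fun p => p + (x₀, x₀s)) '' vdash A) p < ⊤}
        = (fun p => p + (x₀, x₀s)) '' vdash A := by

  obtain ⟨⟨S, hS⟩, hzero⟩ := hA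
  set c : X × (X →L[ℝ] ℝ) := (x₀, x₀s) with hc
  set T : Set (X × (X →L[ℝ] ℝ)) := (fun p => p + c) '' vdash A with hT
  have hmono := hmax.1
  -- T is monotone
  have hTmono : ∀ p ∈ T, ∀ q ∈ T, 0 ≤ (p.2 - q.2) (p.1 - q.1) := by
    rintro p ⟨p', hp', rfl⟩ q ⟨q', hq', rfl⟩
    have := hmono p' hp' q' hq'
    simpa using this
  -- zero is in vdash A, so c ∈ T
  have h0 : (0 : X × (X →L[ℝ] ℝ)) ∈ vdash A := by
    intro a _; simp
  have hcT : c ∈ T := ⟨0, h0, by simp⟩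
  -- key: enlargement T ε ⊆ T
  have key : ∀ ε : ℝ, 0 ≤ ε → enlargement T ε ⊆ T := by
    intro ε hε p hp
    have hpv : p - c ∈ vdash A := by
      intro a ha
      -- for each t, t • a ∈ A hence in vdash A
      have hAv : ∀ t : ℝ, (t • a) ∈ vdash A := by
        intro t
        have htA : t • a ∈ A := by
          rw [hS] at ha ⊢
          exact S.smul_mem t ha
        -- A ⊆ vdash A
        intro b hb
        have hsum : b + t • a ∈ A := by
          rw [hS] at hb htA ⊢
          exact S.add_mem hb htA
        have h1 := hzero _ hsum
        have h2 := hzero _ hb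
        have h3 := hzero _ htA
        simp only [Prod.fst_add, Prod.snd_add, ContinuousLinearMap.add_apply, map_add,
          Prod.smul_fst, Prod.smul_snd, ContinuousLinearMap.smul_apply, map_smul,
          smul_eq_mul] at h1 h2 h3 ⊢
        nlinarith [h1, h2, h3]
      have hlin : ∀ t : ℝ, (p.2 - c.2) (p.1 - c.1)
          - t * (a.2 (p.1 - c.1) + (p.2 - c.2) a.1) ≥ -ε := by
        intro t
        have hmem : (t • a + c) ∈ T := ⟨t • a, hAv t, rfl⟩
        have := hp _ hmem
        have haa : (a.2) a.1 = 0 := hzero a ha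
        simp only [Prod.fst_add, Prod.snd_add, Prod.smul_fst, Prod.smul_snd,
          ContinuousLinearMap.sub_apply, ContinuousLinearMap.add_apply,
          ContinuousLinearMap.smul_apply, map_sub, map_add, map_smul, smul_eq_mul] at this ⊢
        rw [haa] at this
        ring_nf at this ⊢
        linarith [this]
      set b := a.2 (p.1 - c.1) + (p.2 - c.2) a.1 with hb
      have hb0 : b = 0 := by
        by_contra hb0
        have := hlin (((p.2 - c.2) (p.1 - c.1) + ε + 1) / b)
        rw [div_mul_cancel₀ _ hb0] at this
        linarith
      have := hb0
      simp only [hb, map_sub, ContinuousLinearMap.sub_apply] at this ⊢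
      simp only [Prod.fst_sub, Prod.snd_sub, map_sub, ContinuousLinearMap.sub_apply]
      linarith [this]
    exact ⟨p - c, hpv, by simp⟩
  constructor
  · intro ε hε
    refine Set.Subset.antisymm (key ε hε) ?_
    intro p hp q hq
    have := hTmono p hp q hq
    linarith
  · apply Set.Subset.antisymm
    · intro p hp
      simp only [Set.mem_setOf_eq] at hp
      -- extract bound
      have hne : fitzpatrick T p ≠ ⊥ := by
        have hle : ((c.2 p.1 + p.2 c.1 - c.2 c.1 : ℝ) : EReal) ≤ fitzpatrick T p :=
          le_iSup₂_of_le c hcT le_rfl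
        intro h
        rw [h] at hle
        exact absurd (le_bot_iff.mp hle) (EReal.coe_ne_bot _)
      set M := (fitzpatrick T p).toReal with hM
      have hfeq : fitzpatrick T p = (M : EReal) := (EReal.coe_toReal hp.ne hne).symm
      have hbound : ∀ q ∈ T, q.2 p.1 + p.2 q.1 - q.2 q.1 ≤ M := by
        intro q hq
        have hle : ((q.2 p.1 + p.2 q.1 - q.2 q.1 : ℝ) : EReal) ≤ fitzpatrick T p :=
          le_iSup₂_of_le q hq le_rfl
        rw [hfeq] at hle
        exact_mod_cast hle
      have hε : (0 : ℝ) ≤ max (M - p.2 p.1) 0 := le_max_right _ _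
      apply key _ hε
      intro q hq
      have h1 := hbound q hq
      have h2 : (p.2 - q.2) (p.1 - q.1) = p.2 p.1 - (q.2 p.1 + p.2 q.1 - q.2 q.1) := by
        simp only [ContinuousLinearMap.sub_apply, map_sub]
        ring
      have h3 : M - p.2 p.1 ≤ max (M - p.2 p.1) 0 := le_max_left _ _
      rw [h2]; linarith
    · intro p hp
      simp only [Set.mem_setOf_eq]
      have hlt : fitzpatrick T p ≤ ((p.2 p.1 : ℝ) : EReal) := by
        apply iSup₂_le
        intro q hq
        have := hTmono p hp q hq
        have h2 : (p.2 - q.2) (p.1 - q.1) = p.2 p.1 - (q.2 p.1 + p.2 q.1 - q.2 q.1) := by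
          simp only [ContinuousLinearMap.sub_apply, map_sub]; ring
        have : q.2 p.1 + p.2 q.1 - q.2 q.1 ≤ p.2 p.1 := by linarith [this, h2.symm ▸ this]
        exact_mod_cast this
      exact lt_of_le_of_lt hlt (EReal.coe_lt_top _)
end

section
/- Let X be a reflexive real Banach space and T : X ⇉ X* a maximal monotone operator. Then T is non-enlargeable (T^ε = T for all ε ≥ 0) if and only if there exist a self-cancelling set A ⊂ X × X* and a point (x, x*) ∈ X × X* such that A^⊢ is maximal monotone and T = A^⊢ + {(x, x*)}. -/
open Set

section
variable {E : Type*} [AddCommGroup E] [Module ℝ E]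

lemma AddSubgroup.smul_mem_of_isClosed [TopologicalSpace E] [ContinuousSMul ℝ E]
    (G : AddSubgroup E) (hG : IsClosed (G : Set E)) (hhalf : ∀ x ∈ G, (2⁻¹ : ℝ) • x ∈ G)
    (t : ℝ) {x : E} (hx : x ∈ G) : t • x ∈ G := by
  let H : AddSubgroup ℝ := G.comap (LinearMap.toSpanSingleton ℝ E x).toAddMonoidHom
  have hmem (s : ℝ) : s ∈ H ↔ s • x ∈ G := Iff.rfl
  have hclosed : IsClosed (H : Set ℝ) := hG.preimage (continuous_id.smul continuous_const)
  have hone : (1 : ℝ) ∈ H := (hmem 1).2 (by simpa using hx)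
  have hbot : H ≠ ⊥ := fun h => one_ne_zero ((AddSubgroup.mem_bot).1 (h ▸ hone))
  have hdense : Dense (H : Set ℝ) := by
    refine H.dense_of_no_min hbot fun ⟨a, ⟨ha, ha0⟩, hleast⟩ => ?_
    have hhalf_a : 2⁻¹ * a ∈ H := by
      rw [hmem, mul_smul]
      exact hhalf _ ha
    have := hleast ⟨hhalf_a, by positivity⟩
    linarith
  rw [← hmem, ← SetLike.mem_coe, ← hclosed.closure_eq, hdense.closure_eq]
  exact mem_univ t

lemma exists_submodule_eq_of_isClosed_of_reflection [TopologicalSpace E] [ContinuousSMul ℝ E]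
    {S : Set E} (hS : IsClosed S) (h0 : 0 ∈ S) (hmid : ∀ x ∈ S, ∀ y ∈ S, (2⁻¹ : ℝ) • (x + y) ∈ S)
    (hrefl : ∀ x ∈ S, ∀ y ∈ S, x + x - y ∈ S) : ∃ P : Submodule ℝ E, (P : Set E) = S := by
  let G : AddSubgroup E :=
    { carrier := S
      zero_mem' := h0
      neg_mem' := fun {x} hx => by simpa using hrefl 0 h0 x hx
      add_mem' := fun {x y} hx hy => by
        convert hrefl _ (hmid x hx y hy) 0 h0 using 1
        module }
  have hhalf : ∀ x ∈ G, (2⁻¹ : ℝ) • x ∈ G := fun x hx => by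
    show (2⁻¹ : ℝ) • x ∈ S
    simpa using hmid x hx 0 h0
  exact ⟨{ G with smul_mem' := fun t x hx => G.smul_mem_of_isClosed hS hhalf t hx }, rfl⟩

end

lemma eq_zero_of_forall_le_sub_mul {a b c : ℝ} (h : ∀ t : ℝ, c ≤ a - t * b) : b = 0 := by
  by_contra hb
  have := h ((a - c + 1) / b)
  rw [div_mul_cancel₀ _ hb] at this
  linarith

lemma exists_dual_eq_zero_of_notMem {E : Type*} [NormedAddCommGroup E] [NormedSpace ℝ E]
    (P : Submodule ℝ E) (hP : IsClosed (P : Set E)) {x : E} (hx : x ∉ P) :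
    ∃ f : StrongDual ℝ E, (∀ y ∈ P, f y = 0) ∧ f x ≠ 0 := by
  obtain ⟨f, u, hfu, hux⟩ := geometric_hahn_banach_closed_point P.convex hP hx
  have hu : 0 < u := by simpa using hfu 0 P.zero_mem
  refine ⟨f, fun y hy => ?_, by linarith⟩
  by_contra hfy
  have := hfu _ (P.smul_mem (u / f y) hy)
  rw [map_smul, smul_eq_mul, div_mul_cancel₀ _ hfy] at this
  exact lt_irrefl u this

section
variable {X : Type*} [NormedAddCommGroup X] [NormedSpace ℝ X]

lemma sub_apply_sub_eq (p q : X × (X →L[ℝ] ℝ)) :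
    (p.2 - q.2) (p.1 - q.1) = p.2 p.1 - (p.2 q.1 + q.2 p.1) + q.2 q.1 := by
  simp only [sub_apply, map_sub]
  ring

lemma sub_apply_sub_comm (p q : X × (X →L[ℝ] ℝ)) :
    (p.2 - q.2) (p.1 - q.1) = (q.2 - p.2) (q.1 - p.1) := by
  rw [sub_apply_sub_eq, sub_apply_sub_eq]
  ring

variable {T : Set (X × (X →L[ℝ] ℝ))}

lemma IsMonotoneSet.closure (hT : IsMonotoneSet T) : IsMonotoneSet (_root_.closure T) := by
  have hcont : Continuous fun z : (X × (X →L[ℝ] ℝ)) × (X × (X →L[ℝ] ℝ)) =>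
      (z.1.2 - z.2.2) (z.1.1 - z.2.1) := by fun_prop
  have hsub : _root_.closure (T ×ˢ T) ⊆ {z | 0 ≤ (z.1.2 - z.2.2) (z.1.1 - z.2.1)} :=
    closure_minimal (fun z hz => hT _ hz.1 _ hz.2) (isClosed_le continuous_const hcont)
  intro p hp q hq
  have hpq : (p, q) ∈ _root_.closure (T ×ˢ T) := by
    rw [closure_prod_eq]
    exact ⟨hp, hq⟩
  exact hsub hpq

lemma isMonotoneSet_image_add_right (v : X × (X →L[ℝ] ℝ)) :
    IsMonotoneSet ((· + v) '' T) ↔ IsMonotoneSet T := by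
  simp only [IsMonotoneSet, forall_mem_image, Prod.fst_add, Prod.snd_add,
    add_sub_add_right_eq_sub]

namespace IsMaximalMonotone

lemma mem_of_forall_nonneg (hT : IsMaximalMonotone T) {r : X × (X →L[ℝ] ℝ)}
    (h : ∀ q ∈ T, 0 ≤ (r.2 - q.2) (r.1 - q.1)) : r ∈ T := by
  have hmono : IsMonotoneSet (insert r T) := by
    rintro p (rfl | hp) q (rfl | hq)
    · simp
    · exact h q hq
    · rw [sub_apply_sub_comm]
      exact h p hp
    · exact hT.1 p hp q hq
  exact hT.2 _ hmono (subset_insert _ _) ▸ mem_insert r T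

lemma nonempty (hT : IsMaximalMonotone T) : T.Nonempty := by
  rw [nonempty_iff_ne_empty]
  rintro rfl
  exact hT.mem_of_forall_nonneg (r := 0) (by simp)

lemma isClosed (hT : IsMaximalMonotone T) : IsClosed T := by
  rw [← hT.2 _ hT.1.closure subset_closure]
  exact isClosed_closure

lemma image_add_right (hT : IsMaximalMonotone T) (v : X × (X →L[ℝ] ℝ)) :
    IsMaximalMonotone ((· + v) '' T) := by
  refine ⟨(isMonotoneSet_image_add_right v).2 hT.1, fun S hS hTS => ?_⟩
  have hback : (· + -v) '' S = T := by
    refine hT.2 _ ((isMonotoneSet_image_add_right _).2 hS) fun t ht => ?_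
    exact ⟨t + v, hTS (mem_image_of_mem _ ht), by simp⟩
  rw [← hback, image_image]
  simp

end IsMaximalMonotone

lemma IsMonotoneSet.subset_enlargement (hT : IsMonotoneSet T) {ε : ℝ} (hε : 0 ≤ ε) :
    T ⊆ enlargement T ε :=
  fun p hp q hq => (neg_nonpos.2 hε).trans (hT p hp q hq)

lemma enlargement_image_add_right (v : X × (X →L[ℝ] ℝ)) (ε : ℝ) :
    enlargement ((· + v) '' T) ε = (· + v) '' enlargement T ε := by
  ext r
  constructor
  · intro hr
    refine ⟨r + -v, fun t ht => ?_, by simp⟩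
    convert hr _ (mem_image_of_mem _ ht) using 2 <;> simp only [Prod.fst_add, Prod.snd_add,
      Prod.fst_neg, Prod.snd_neg] <;> abel
  · rintro ⟨s, hs, rfl⟩ _ ⟨t, ht, rfl⟩
    simpa only [Prod.fst_add, Prod.snd_add, add_sub_add_right_eq_sub] using hs t ht

def IsNonEnlargeable (T : Set (X × (X →L[ℝ] ℝ))) : Prop :=
  ∀ ε : ℝ, 0 ≤ ε → enlargement T ε = T

namespace IsNonEnlargeable

lemma image_add_right (hE : IsNonEnlargeable T) (v : X × (X →L[ℝ] ℝ)) :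
    IsNonEnlargeable ((· + v) '' T) :=
  fun ε hε => by rw [enlargement_image_add_right, hE ε hε]

/-- The midpoint lies in the `⟨p - q, p* - q*⟩ / 4`-enlargement, by the parallelogram identity. -/
lemma smul_add_mem (hE : IsNonEnlargeable T) (hT : IsMonotoneSet T) {p q : X × (X →L[ℝ] ℝ)}
    (hp : p ∈ T) (hq : q ∈ T) : (2⁻¹ : ℝ) • (p + q) ∈ T := by
  have hpq : 0 ≤ (p.2 - q.2) (p.1 - q.1) := hT p hp q hq
  rw [← hE ((p.2 - q.2) (p.1 - q.1) / 4) (by positivity)]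
  intro s hs
  have hps := hT p hp s hs
  have hqs := hT q hq s hs
  simp only [sub_apply, add_apply, smul_apply, Prod.smul_fst, Prod.smul_snd, Prod.fst_add,
    Prod.snd_add, map_sub, map_add, map_smul, smul_eq_mul] at hpq hps hqs ⊢
  linarith

/-- `(p + p - q) - s` is twice `p - m`, where `m ∈ T` is the midpoint of `q` and `s`. -/
lemma add_sub_mem (hE : IsNonEnlargeable T) (hT : IsMaximalMonotone T)
    {p q : X × (X →L[ℝ] ℝ)} (hp : p ∈ T) (hq : q ∈ T) : p + p - q ∈ T := by
  refine hT.mem_of_forall_nonneg fun s hs => ?_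
  have h := hT.1 p hp _ (hE.smul_add_mem hT.1 hq hs)
  simp only [sub_apply, add_apply, smul_apply, Prod.smul_fst, Prod.smul_snd, Prod.fst_add,
    Prod.snd_add, Prod.fst_sub, Prod.snd_sub, map_sub, map_add, map_smul, smul_eq_mul] at h ⊢
  linarith

end IsNonEnlargeable

def vdashSubmodule (B : Set (X × (X →L[ℝ] ℝ))) : Submodule ℝ (X × (X →L[ℝ] ℝ)) where
  carrier := vdash B
  add_mem' {a b} ha hb p hp := by
    simp only [Prod.fst_add, Prod.snd_add, map_add, add_apply]
    linarith [ha p hp, hb p hp]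
  zero_mem' p _ := by simp
  smul_mem' c a ha p hp := by
    simp only [Prod.smul_fst, Prod.smul_snd, map_smul, smul_apply, smul_eq_mul]
    linear_combination c * ha p hp

lemma subset_vdash_vdash (B : Set (X × (X →L[ℝ] ℝ))) : B ⊆ vdash (vdash B) :=
  fun p hp q hq => by linarith [hq p hp]

lemma IsSelfCancelling.subset_vdash {A : Set (X × (X →L[ℝ] ℝ))} (hA : IsSelfCancelling A) :
    A ⊆ vdash A := by
  obtain ⟨⟨P, rfl⟩, hzero⟩ := hA
  intro a ha p hp
  have h := hzero _ (P.add_mem hp ha)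
  simp only [Prod.fst_add, Prod.snd_add, map_add, add_apply] at h
  linarith [hzero _ hp, hzero _ ha]

lemma isSelfCancelling_vdash_of_vdash_subset {S : Set (X × (X →L[ℝ] ℝ))} (h : vdash S ⊆ S) :
    IsSelfCancelling (vdash S) :=
  ⟨⟨vdashSubmodule S, rfl⟩, fun p hp => by linarith [hp p (h hp)]⟩

/-- For `a ∈ S^⊢` the cross terms of `⟨a - y, a* - y*⟩` cancel, leaving `⟨a, a*⟩ + ⟨y, y*⟩`. -/
lemma vdash_subset_of_isNonEnlargeable {S : Set (X × (X →L[ℝ] ℝ))} (hS : IsMaximalMonotone S)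
    (hE : IsNonEnlargeable S) (h0 : 0 ∈ S) : vdash S ⊆ S := by
  intro a ha
  have hbound : ∀ y ∈ S, a.2 a.1 ≤ (a.2 - y.2) (a.1 - y.1) := fun y hy => by
    have hy0 : 0 ≤ y.2 y.1 := by simpa using hS.1 y hy 0 h0
    rw [sub_apply_sub_eq]
    linarith [ha y hy]
  rcases le_or_gt 0 (a.2 a.1) with hpos | hneg
  · exact hS.mem_of_forall_nonneg fun y hy => hpos.trans (hbound y hy)
  · rw [← hE _ (neg_nonneg.2 hneg.le)]
    exact fun y hy => (neg_neg (a.2 a.1)).le.trans (hbound y hy)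

lemma exists_forall_eq_pairing
    (hrefl : Function.Surjective (NormedSpace.inclusionInDoubleDual ℝ X))
    (f : StrongDual ℝ (X × (X →L[ℝ] ℝ))) :
    ∃ g : X × (X →L[ℝ] ℝ), ∀ z : X × (X →L[ℝ] ℝ), f z = z.2 g.1 + g.2 z.1 := by
  obtain ⟨x, hx⟩ := hrefl (f.comp (ContinuousLinearMap.inr ℝ X (X →L[ℝ] ℝ)))
  refine ⟨(x, f.comp (ContinuousLinearMap.inl ℝ X (X →L[ℝ] ℝ))), fun z => ?_⟩
  have hx' : z.2 x = f (0, z.2) := by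
    simpa [NormedSpace.dual_def] using congrArg (fun Φ => Φ z.2) hx
  rw [hx']
  change f z = f (0, z.2) + f (z.1, 0)
  rw [← map_add]
  simp

lemma vdash_vdash_eq_of_isClosed
    (hrefl : Function.Surjective (NormedSpace.inclusionInDoubleDual ℝ X))
    (P : Submodule ℝ (X × (X →L[ℝ] ℝ))) (hP : IsClosed (P : Set (X × (X →L[ℝ] ℝ)))) :
    vdash (vdash (P : Set (X × (X →L[ℝ] ℝ)))) = P := by
  refine Subset.antisymm (fun r hr => ?_) (subset_vdash_vdash _)
  by_contra hrP
  obtain ⟨f, hfP, hfr⟩ := exists_dual_eq_zero_of_notMem P hP hrP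
  obtain ⟨g, hg⟩ := exists_forall_eq_pairing hrefl f
  have hgP : g ∈ vdash (P : Set (X × (X →L[ℝ] ℝ))) := fun p hp => (hg p).symm.trans (hfP p hp)
  exact hfr ((hg r).trans (by linarith [hr g hgP]))

lemma IsSelfCancelling.isNonEnlargeable_vdash {A : Set (X × (X →L[ℝ] ℝ))}
    (hA : IsSelfCancelling A) (hmono : IsMonotoneSet (vdash A)) :
    IsNonEnlargeable (vdash A) := by
  intro ε hε
  refine Subset.antisymm (fun r hr p hp => ?_) (hmono.subset_enlargement hε)
  refine eq_zero_of_forall_le_sub_mul (c := -ε) (a := r.2 r.1) fun t => ?_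
  have h := hr _ ((vdashSubmodule A).smul_mem t (hA.subset_vdash hp))
  rw [sub_apply_sub_eq] at h
  simp only [Prod.smul_fst, Prod.smul_snd, map_smul, smul_apply, smul_eq_mul, hA.2 p hp] at h
  linarith

end

theorem nonEnlargeable_iff_translate_of_vdash_selfCancelling_general {X : Type*}
    [NormedAddCommGroup X] [NormedSpace ℝ X]
    (hrefl : Function.Surjective (NormedSpace.inclusionInDoubleDual ℝ X))
    (T : Set (X × (X →L[ℝ] ℝ))) (hT : IsMaximalMonotone T) :
    (∀ ε : ℝ, 0 ≤ ε → enlargement T ε = T) ↔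
      ∃ (A : Set (X × (X →L[ℝ] ℝ))) (x : X) (xs : X →L[ℝ] ℝ),
        IsSelfCancelling A ∧ IsMaximalMonotone (vdash A) ∧
          T = (fun p => p + (x, xs)) '' vdash A := by
  constructor
  · intro hE
    obtain ⟨w, hw⟩ := hT.nonempty
    set S := (· + -w) '' T
    have hS : IsMaximalMonotone S := hT.image_add_right (-w)
    have hSE : IsNonEnlargeable S := IsNonEnlargeable.image_add_right hE (-w)
    have h0 : (0 : X × (X →L[ℝ] ℝ)) ∈ S := ⟨w, hw, add_neg_cancel w⟩
    obtain ⟨P, hP⟩ := exists_submodule_eq_of_isClosed_of_reflection hS.isClosed h0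
      (fun _ hx _ hy => hSE.smul_add_mem hS.1 hx hy) (fun _ hx _ hy => hSE.add_sub_mem hS hx hy)
    have hvv : vdash (vdash S) = S := hP ▸ vdash_vdash_eq_of_isClosed hrefl P (hP ▸ hS.isClosed)
    refine ⟨vdash S, w.1, w.2,
      isSelfCancelling_vdash_of_vdash_subset (vdash_subset_of_isNonEnlargeable hS hSE h0),
      by rw [hvv]; exact hS, ?_⟩
    rw [hvv, image_image]
    simp
  · rintro ⟨A, x, xs, hA, hAmax, rfl⟩
    exact (hA.isNonEnlargeable_vdash hAmax.1).image_add_right (x, xs)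

/-- In a reflexive real Banach space `X`, a maximal monotone `T : X ⇉ X*` is
non-enlargeable iff `T = A^⊢ + {(x, x*)}` for some self-cancelling `A` with `A^⊢`
maximal monotone and some `(x, x*) ∈ X × X*`. -/
theorem nonEnlargeable_iff_translate_of_vdash_selfCancelling {X : Type*}
    [NormedAddCommGroup X] [NormedSpace ℝ X] [CompleteSpace X]
    (hrefl : Function.Surjective (NormedSpace.inclusionInDoubleDual ℝ X))
    (T : Set (X × (X →L[ℝ] ℝ))) (hT : IsMaximalMonotone T) :
    (∀ ε : ℝ, 0 ≤ ε → enlargement T ε = T) ↔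
      ∃ (A : Set (X × (X →L[ℝ] ℝ))) (x : X) (xs : X →L[ℝ] ℝ),
        IsSelfCancelling A ∧ IsMaximalMonotone (vdash A) ∧
          T = (fun p => p + (x, xs)) '' vdash A :=
  nonEnlargeable_iff_translate_of_vdash_selfCancelling_general hrefl T hT
end

section
/- Let X be a real Banach space. If A ⊂ X × X* is self-cancelling and A^⊢ is monotone, then A^⊢ is maximal monotone. -/
/-- A self-cancelling set is contained in its own `⊢`. -/
lemma subset_vdash_self {X : Type*} [NormedAddCommGroup X] [NormedSpace ℝ X]
    (A : Set (X × (X →L[ℝ] ℝ))) (hA : IsSelfCancelling A) : A ⊆ vdash A := by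
  obtain ⟨⟨S0, rfl⟩, hsc⟩ := hA
  intro r hr p hp
  have hsum : ((p + r : X × (X →L[ℝ] ℝ)).2) ((p + r).1) = 0 :=
    hsc _ (S0.add_mem hp hr)
  have hp0 := hsc p hp
  have hr0 := hsc r hr
  simp only [Prod.fst_add, Prod.snd_add, ContinuousLinearMap.add_apply, map_add] at hsum
  linarith

/-- If `A ⊆ X × X*` is self-cancelling and `A^⊢` is monotone, then `A^⊢` is
maximal monotone. -/
theorem vdash_maximalMonotone_of_monotone {X : Type*} [NormedAddCommGroup X]
    [NormedSpace ℝ X] [CompleteSpace X] (A : Set (X × (X →L[ℝ] ℝ)))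
    (hA : IsSelfCancelling A) (hmono : IsMonotoneSet (vdash A)) :
    IsMaximalMonotone (vdash A) := by
  have hAsub := subset_vdash_self A hA
  obtain ⟨⟨S0, hS0⟩, hsc⟩ := hA
  refine ⟨hmono, fun S hS hsub => ?_⟩
  refine Set.Subset.antisymm (fun q hq => ?_) hsub
  intro p hp
  have key : ∀ t : ℝ, 0 ≤ q.2 q.1 - t * (p.2 q.1 + q.2 p.1) := by
    intro t
    have htA : (t • p : X × (X →L[ℝ] ℝ)) ∈ A := by
      rw [hS0] at hp ⊢
      exact S0.smul_mem t hp
    have htS : (t • p : X × (X →L[ℝ] ℝ)) ∈ S := hsub (hAsub htA)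
    have h := hS q hq _ htS
    have hpp : p.2 p.1 = 0 := hsc p hp
    simp only [Prod.smul_fst, Prod.smul_snd, ContinuousLinearMap.sub_apply, map_sub,
      ContinuousLinearMap.coe_smul', Pi.smul_apply, map_smul, smul_eq_mul, hpp] at h
    nlinarith [h]
  by_contra hc
  rcases lt_or_gt_of_ne hc with h | h
  · have := key ((q.2 q.1 + 1) / (p.2 q.1 + q.2 p.1))
    rw [div_mul_cancel₀ _ (ne_of_lt h)] at this
    linarith
  · have := key ((q.2 q.1 + 1) / (p.2 q.1 + q.2 p.1))
    rw [div_mul_cancel₀ _ (ne_of_gt h)] at this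
    linarith
end

section
/- Let X be a real Banach space and M : X ⇉ X* a linear point-to-set operator (i.e. M is a linear subspace of X × X*). If M is skew, that is M = M^⊢, then M is maximal self-cancelling. -/
/-- If a linear point-to-set operator `M : X ⇉ X*` (a linear subspace of `X × X*`) is
skew, i.e. `M = M^⊢`, then `M` is maximal self-cancelling. -/
theorem skew_isMaximalSelfCancelling {X : Type*} [NormedAddCommGroup X]
    [NormedSpace ℝ X] [CompleteSpace X] (M : Set (X × (X →L[ℝ] ℝ)))
    (hlin : ∃ S : Submodule ℝ (X × (X →L[ℝ] ℝ)), M = ↑S)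
    (hskew : M = vdash M) :
    IsSelfCancelling M ∧ ∀ B, IsSelfCancelling B → M ⊆ B → B = M := by
  have hsc : IsSelfCancelling M := by
    refine ⟨hlin, fun p hp => ?_⟩
    have h : p ∈ vdash M := hskew ▸ hp
    have h2 := h p hp
    linarith
  refine ⟨hsc, fun B hB hMB => ?_⟩
  obtain ⟨T, rfl⟩ := hB.1
  apply Set.Subset.antisymm _ hMB
  intro b hb
  rw [hskew]
  intro m hm
  have hmB : m ∈ T := hMB hm
  have hsum : (m + b) ∈ (T : Set _) := T.add_mem hmB hb
  have h1 := hB.2 _ hsum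
  have h2 := hB.2 _ hmB
  have h3 := hB.2 _ hb
  simp only [Prod.fst_add, Prod.snd_add, ContinuousLinearMap.add_apply, map_add] at h1
  linarith
end

section
/- Let X be a real Banach space and M : X ⇉ X* a linear point-to-set operator. If M is maximal self-cancelling and its domain D(M) = {x ∈ X : ∃ x* with (x, x*) ∈ M} is a closed subspace of X, then M is skew, i.e. M = M^⊢. -/
/-- Separation of a point from a closed subspace by a continuous functional. -/
lemma aux_exists_functional {X : Type*} [NormedAddCommGroup X] [NormedSpace ℝ X]
    (D : Submodule ℝ X) (hD : IsClosed (D : Set X)) {y : X} (hy : y ∉ D) :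
    ∃ f : X →L[ℝ] ℝ, (∀ x ∈ D, f x = 0) ∧ f y = 1 := by
  obtain ⟨f, u, hfs, hux⟩ := geometric_hahn_banach_closed_point
    (s := (D : Set X)) (D.convex) hD hy
  have hu : 0 < u := by simpa using hfs 0 D.zero_mem
  have hf0 : ∀ x ∈ D, f x = 0 := by
    intro x hx
    by_contra hne
    have h1 : f (((u + 1) / f x) • x) < u := hfs _ (D.smul_mem _ hx)
    rw [map_smul] at h1
    rw [smul_eq_mul, div_mul_cancel₀ _ hne] at h1
    linarith
  have hfy : f y ≠ 0 := by
    have : u < f y := hux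
    linarith
  refine ⟨(f y)⁻¹ • f, ?_, ?_⟩
  · intro x hx
    simp [hf0 x hx]
  · simp [inv_mul_cancel₀ hfy]

/-- If a linear point-to-set operator `M : X ⇉ X*` is maximal self-cancelling and its
domain `D(M) = {x : ∃ x*, (x, x*) ∈ M}` is closed, then `M` is skew: `M = M^⊢`. -/
theorem maximalSelfCancelling_skew_of_closed_domain {X : Type*} [NormedAddCommGroup X]
    [NormedSpace ℝ X] [CompleteSpace X] (M : Set (X × (X →L[ℝ] ℝ)))
    (hA : IsSelfCancelling M)
    (hmax : ∀ B, IsSelfCancelling B → M ⊆ B → B = M)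
    (hdom : IsClosed {x : X | ∃ xs : X →L[ℝ] ℝ, (x, xs) ∈ M}) :
    M = vdash M := by
  obtain ⟨⟨S, hS⟩, hsc⟩ := hA
  -- key lemma: any pair orthogonal to M with vanishing self-pairing lies in M
  have key : ∀ (y : X) (w : X →L[ℝ] ℝ), w y = 0 →
      (∀ p ∈ M, p.2 y + w p.1 = 0) → (y, w) ∈ M := by
    intro y w h0 horth
    have hB : IsSelfCancelling ((S ⊔ Submodule.span ℝ {(y, w)} : Submodule ℝ (X × (X →L[ℝ] ℝ))) : Set (X × (X →L[ℝ] ℝ))) := by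
      refine ⟨⟨_, rfl⟩, ?_⟩
      intro p hp
      rw [SetLike.mem_coe, Submodule.mem_sup] at hp
      obtain ⟨a, ha, b, hb, rfl⟩ := hp
      rw [Submodule.mem_span_singleton] at hb
      obtain ⟨t, rfl⟩ := hb
      have ha' : a ∈ M := by rw [hS]; exact ha
      have h1 : a.2 a.1 = 0 := hsc a ha'
      have h2 : a.2 y + w a.1 = 0 := horth a ha'
      simp only [Prod.fst_add, Prod.snd_add, Prod.smul_fst, Prod.smul_snd,
        ContinuousLinearMap.add_apply, ContinuousLinearMap.coe_smul',
        Pi.smul_apply, map_add, map_smul, smul_eq_mul]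
      linear_combination h1 + t * h2 + (t * t) * h0
    have hsub : M ⊆ ↑(S ⊔ Submodule.span ℝ {(y, w)}) := by
      rw [hS]
      exact fun x hx => (le_sup_left : S ≤ S ⊔ Submodule.span ℝ {(y, w)}) hx
    have hBM := hmax _ hB hsub
    rw [← hBM]
    exact Submodule.mem_sup_right (Submodule.mem_span_singleton_self _)
  -- easy direction
  have hMsub : M ⊆ vdash M := by
    intro p hp r hr
    have hsum : r + p ∈ M := by
      rw [hS] at hp hr ⊢
      exact S.add_mem hr hp
    have := hsc _ hsum
    simp only [Prod.fst_add, Prod.snd_add, ContinuousLinearMap.add_apply, map_add] at this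
    have h1 := hsc p hp
    have h2 := hsc r hr
    linarith
  refine Set.Subset.antisymm hMsub ?_
  intro q hq
  -- the domain as a closed submodule
  set D : Submodule ℝ X := S.map (LinearMap.fst ℝ X (X →L[ℝ] ℝ)) with hD
  have hDset : {x : X | ∃ xs : X →L[ℝ] ℝ, (x, xs) ∈ M} = ↑D := by
    ext x
    simp only [Set.mem_setOf_eq, hD, SetLike.mem_coe, Submodule.mem_map, hS]
    constructor
    · rintro ⟨xs, hxs⟩; exact ⟨(x, xs), hxs, rfl⟩
    · rintro ⟨p, hp, rfl⟩; exact ⟨p.2, hp⟩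
  have hDclosed : IsClosed (D : Set X) := by rw [← hDset]; exact hdom
  -- first component of q is in the domain
  have hq1 : q.1 ∈ D := by
    by_contra hnot
    obtain ⟨f, hf0, hf1⟩ := aux_exists_functional D hDclosed hnot
    set w : X →L[ℝ] ℝ := q.2 - (q.2 q.1) • f with hw
    have hwy : w q.1 = 0 := by
      simp [hw, hf1]
    have horth : ∀ p ∈ M, p.2 q.1 + w p.1 = 0 := by
      intro p hp
      have hfp : f p.1 = 0 := by
        apply hf0
        rw [hD]
        exact ⟨p, by rw [hS] at hp; exact hp, rfl⟩
      have := hq p hp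
      simp only [hw, ContinuousLinearMap.sub_apply, ContinuousLinearMap.coe_smul',
        Pi.smul_apply, smul_eq_mul, hfp, mul_zero, sub_zero]
      linarith
    have : (q.1, w) ∈ M := key q.1 w hwy horth
    apply hnot
    rw [hD]
    exact ⟨(q.1, w), by rw [hS] at this; exact this, rfl⟩
  -- obtain (q.1, z) ∈ M
  obtain ⟨p', hp'S, hp'1⟩ := hq1
  have hp'M : p' ∈ M := by rw [hS]; exact hp'S
  set z : X →L[ℝ] ℝ := p'.2 with hz
  have hzM : (q.1, z) ∈ M := by
    have : p' = (q.1, z) := by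
      rw [hz, ← hp'1]; rfl
    rw [← this]; exact hp'M
  -- the correction (0, q.2 - z) is in M
  have hcorr : ((0 : X), q.2 - z) ∈ M := by
    apply key
    · simp
    · intro p hp
      have h1 := hq p hp
      have h2 := hMsub hzM p hp
      simp only [ContinuousLinearMap.sub_apply, map_zero]
      linarith
  -- conclude
  have : q = (q.1, z) + ((0 : X), q.2 - z) := by
    ext
    · simp
    · simp
  rw [this, hS]
  exact S.add_mem (by rw [hS] at hzM; exact hzM) (by rw [hS] at hcorr; exact hcorr)
end

section
/- Let X be a reflexive real Banach space and M : X ⇉ X* a linear point-to-set operator. If M is maximal self-cancelling and its range R(M) = {x* ∈ X* : ∃ x with (x, x*) ∈ M} is a closed subspace of X*, then M is skew, i.e. M = M^⊢. -/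
/-- Let `X` be a reflexive real Banach space. If a linear point-to-set operator
`M : X ⇉ X*` is maximal self-cancelling and its range
`R(M) = {x* : ∃ x, (x, x*) ∈ M}` is closed, then `M` is skew: `M = M^⊢`. -/
theorem maximalSelfCancelling_skew_of_closed_range {X : Type*} [NormedAddCommGroup X]
    [NormedSpace ℝ X] [CompleteSpace X]
    (hrefl : Function.Surjective (NormedSpace.inclusionInDoubleDual ℝ X))
    (M : Set (X × (X →L[ℝ] ℝ)))
    (hA : IsSelfCancelling M)
    (hmax : ∀ B, IsSelfCancelling B → M ⊆ B → B = M)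
    (hran : IsClosed {xs : X →L[ℝ] ℝ | ∃ x : X, (x, xs) ∈ M}) :
    M = vdash M := by
  obtain ⟨⟨S, rfl⟩, hsc⟩ := hA
  -- Step a: the pre-annihilator of the range, paired with 0, lies in M
  have key : ∀ z : X, (∀ x : X, ∀ xs : X →L[ℝ] ℝ, (x, xs) ∈ (S : Set (X × (X →L[ℝ] ℝ))) → xs z = 0) →
      ((z, (0 : X →L[ℝ] ℝ)) ∈ (S : Set (X × (X →L[ℝ] ℝ)))) := by
    intro z hz
    set B : Submodule ℝ (X × (X →L[ℝ] ℝ)) :=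
      S ⊔ Submodule.span ℝ {((z, 0) : X × (X →L[ℝ] ℝ))} with hBdef
    have hB : IsSelfCancelling (B : Set (X × (X →L[ℝ] ℝ))) := by
      refine ⟨⟨B, rfl⟩, ?_⟩
      intro p hp
      rw [SetLike.mem_coe, hBdef, Submodule.mem_sup] at hp
      obtain ⟨a, ha, b, hb, rfl⟩ := hp
      rw [Submodule.mem_span_singleton] at hb
      obtain ⟨t, rfl⟩ := hb
      have haz : a.2 z = 0 := hz a.1 a.2 ha
      have ha0 : a.2 a.1 = 0 := hsc a ha
      simp [Prod.smul_def, ContinuousLinearMap.add_apply, map_add, ha0, haz]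
    have hMB : (S : Set (X × (X →L[ℝ] ℝ))) ⊆ (B : Set (X × (X →L[ℝ] ℝ))) := by
      intro p hp; exact Submodule.mem_sup_left hp
    have hBM := hmax _ hB hMB
    have : ((z, (0 : X →L[ℝ] ℝ))) ∈ (B : Set (X × (X →L[ℝ] ℝ))) :=
      Submodule.mem_sup_right (Submodule.mem_span_singleton_self _)
    rwa [hBM] at this
  -- Step b: if (y, ys) ∈ M^⊢ then ys ∈ R(M)
  have hy' : ∀ y : X, ∀ ys : X →L[ℝ] ℝ, (y, ys) ∈ vdash (S : Set (X × (X →L[ℝ] ℝ))) →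
      ∃ x, (x, ys) ∈ (S : Set (X × (X →L[ℝ] ℝ))) := by
    intro y ys hv
    by_contra h
    push_neg at h
    set R : Submodule ℝ (X →L[ℝ] ℝ) := Submodule.map (LinearMap.snd ℝ X (X →L[ℝ] ℝ)) S with hRdef
    have hRset : (R : Set (X →L[ℝ] ℝ)) = {xs : X →L[ℝ] ℝ | ∃ x : X, (x, xs) ∈ (S : Set (X × (X →L[ℝ] ℝ)))} := by
      ext xs
      simp only [hRdef, SetLike.mem_coe, Submodule.mem_map, Set.mem_setOf_eq]
      constructor
      · rintro ⟨⟨a, b⟩, hab, rfl⟩; exact ⟨a, hab⟩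
      · rintro ⟨x, hx⟩; exact ⟨(x, xs), hx, rfl⟩
    have hysR : ys ∉ (R : Set (X →L[ℝ] ℝ)) := by
      rw [hRset]; exact fun ⟨x, hx⟩ => h x hx
    have hRclosed : IsClosed (R : Set (X →L[ℝ] ℝ)) := by rw [hRset]; exact hran
    obtain ⟨f, u, hfu, huy⟩ := geometric_hahn_banach_closed_point R.convex hRclosed hysR
    have hf0 : ∀ a ∈ R, f a = 0 := by
      intro a ha
      by_contra hfa
      have ht := hfu (((u + 1) / f a) • a) (R.smul_mem _ ha)
      rw [map_smul, smul_eq_mul, div_mul_cancel₀ _ hfa] at ht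
      linarith
    have hu : 0 < u := by simpa using hfu 0 R.zero_mem
    obtain ⟨w, hw⟩ := hrefl f
    have hwz : ∀ x xs, (x, xs) ∈ (S : Set (X × (X →L[ℝ] ℝ))) → xs w = 0 := by
      intro x xs hx
      have h1 : f xs = 0 := hf0 xs (by rw [← SetLike.mem_coe, hRset]; exact ⟨x, hx⟩)
      have h2 : NormedSpace.inclusionInDoubleDual ℝ X w xs = xs w :=
        NormedSpace.dual_def ℝ X w xs
      rw [hw] at h2
      rw [← h2, h1]
    have hwS := key w hwz
    have hvw := hv (w, 0) hwS
    simp only at hvw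
    have hyw : ys w = 0 := by simpa using hvw
    have h2 : NormedSpace.inclusionInDoubleDual ℝ X w ys = ys w :=
      NormedSpace.dual_def ℝ X w ys
    rw [hw] at h2
    rw [← h2] at hyw
    linarith
  -- Main proof
  ext q
  constructor
  · intro hq p hp
    have hsum := hsc _ (S.add_mem hp hq)
    have h2 := hsc _ hp
    have h3 := hsc _ hq
    simp only [Prod.fst_add, Prod.snd_add, ContinuousLinearMap.add_apply, map_add] at hsum
    linarith
  · intro hq
    obtain ⟨y, ys⟩ := q
    obtain ⟨y'', hy''⟩ := hy' y ys hq
    have hz : ∀ x xs, (x, xs) ∈ (S : Set (X × (X →L[ℝ] ℝ))) → xs (y - y'') = 0 := by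
      intro x xs hx
      have h1 := hq (x, xs) hx
      simp only at h1
      have hsum := hsc _ (S.add_mem hx hy'')
      have h2 := hsc _ hx
      have h3 := hsc _ hy''
      simp only [Prod.fst_add, Prod.snd_add, ContinuousLinearMap.add_apply, map_add] at hsum
      simp only at h2 h3
      rw [map_sub]
      linarith
    have hzS := key _ hz
    have hfin : ((y'', ys) + (y - y'', 0) : X × (X →L[ℝ] ℝ)) ∈ (S : Set (X × (X →L[ℝ] ℝ))) :=
      S.add_mem hy'' hzS
    simpa using hfin
end
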